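/- Let d ≥ 2 and T > 0. Let {x_i}_{i=1}^N ⊂ ℝ^d be pairwise distinct initial points and {z_i}_{i=1}^N ⊂ ℝ^d be arbitrary (not necessarily distinct) target points. Then for every ε > 0 there exist piecewise constant controls A, W : [0,T] → ℝ^{d×d} and b : [0,T] → ℝ^d such that the flow of the Neural ODE satisfies |φ_T(x_i; A, W, b) − z_i| ≤ ε for every i ∈ {1,…,N}. -/

import Mathlib

open MeasureTheory Set

noncomputable section

/-- The ReLU activation applied componentwise. -/
def reluVec {d : ℕ} (x : EuclideanSpace ℝ (Fin d)) : EuclideanSpace ℝ (Fin d) :=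
  WithLp.toLp 2 (fun k => max (x k) 0)

/-- A matrix acting on a vector of `EuclideanSpace ℝ (Fin d)`. -/
def mvec {d : ℕ} (M : Matrix (Fin d) (Fin d) ℝ) (x : EuclideanSpace ℝ (Fin d)) :
    EuclideanSpace ℝ (Fin d) :=
  WithLp.toLp 2 (fun i => ∑ j, M i j * x j)

/-- `f` is piecewise constant on `[0,T]` with (finite) switching set `S`:
it is constant on the pieces of `[0,T]` between consecutive points of `S`. -/
def PCOn {α : Type*} (f : ℝ → α) (T : ℝ) (S : Finset ℝ) : Prop :=
  ∀ t₁ ∈ Set.Icc (0:ℝ) T, ∀ t₂ ∈ Set.Icc (0:ℝ) T, t₁ ≤ t₂ →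
    (∀ s ∈ S, s ∉ Set.Ioc t₁ t₂) → f t₁ = f t₂

/-- `x` is a solution on `[0,T]` of the neural ODE
`ẋ = W(t) σ(A(t) x + b(t))` (ReLU activation), with switching set `S`. -/
def SolvesNODE {d : ℕ} (A W : ℝ → Matrix (Fin d) (Fin d) ℝ)
    (b : ℝ → EuclideanSpace ℝ (Fin d)) (T : ℝ) (S : Finset ℝ)
    (x : ℝ → EuclideanSpace ℝ (Fin d)) : Prop :=
  ContinuousOn x (Set.Icc 0 T) ∧
  ∀ t ∈ Set.Icc (0:ℝ) T, t ∉ S →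
    HasDerivWithinAt x (mvec (W t) (reluVec (mvec (A t) (x t) + b t))) (Set.Icc 0 T) t

/-- `φ` is the time-`T` flow map of the neural ODE. -/
def IsFlowNODE {d : ℕ} (A W : ℝ → Matrix (Fin d) (Fin d) ℝ)
    (b : ℝ → EuclideanSpace ℝ (Fin d)) (T : ℝ) (S : Finset ℝ)
    (φ : EuclideanSpace ℝ (Fin d) → EuclideanSpace ℝ (Fin d)) : Prop :=
  ∀ x₀, ∃ x, SolvesNODE A W b T S x ∧ x 0 = x₀ ∧ x T = φ x₀

/-- The operator norm of a matrix acting on Euclidean space. -/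
def matOpNorm {d : ℕ} (M : Matrix (Fin d) (Fin d) ℝ) : ℝ :=
  sSup ((fun x => ‖mvec M x‖) '' Metric.closedBall (0 : EuclideanSpace ℝ (Fin d)) 1)

/-- `Γ` can be covered, for every `h ∈ (0,1)`, by at most `C h^(-D)` closed
axis-parallel cubes of side `h`. -/
def CoveredByCubes {d : ℕ} (Γ : Set (EuclideanSpace ℝ (Fin d))) (C D : ℝ) : Prop :=
  ∀ h : ℝ, 0 < h → h < 1 →
    ∃ F : Finset (EuclideanSpace ℝ (Fin d)),
      (F.card : ℝ) ≤ C * h ^ (-D) ∧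
      Γ ⊆ ⋃ c ∈ F, {x | ∀ k, c k ≤ x k ∧ x k ≤ c k + h}


/-!
A ramp field `x ↦ (relu (⟪n, x⟫ - α) - relu (⟪n, x⟫ - β)) • w` with `w ⟂ n` preserves
`⟪n, ·⟫`, so each point moves along it on a straight line at constant speed: the points with
`⟪n, x⟫ ≤ α` stay put and those with `⟪n, x⟫ ≥ β` are translated by `(β - α) • w`. Two neurons
realise one ramp on each time step, so any finite list of ramps is realised by piecewise constant
controls.

If the values `⟪n, y i⟫` are distinct, a cascade of ramps, one per level `⟪n, y j⟫`, moves every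
`y i` to any prescribed `y' i` with the same `n`-coordinate. Take a unit `a` separating the `x i`,
a unit `u ⟂ a`, and targets `z' i` within `ε` of `z i` with distinct `a`-coordinates. Three
cascades, along `a`, `u` and `a`, carry `x` exactly to `z'`: the first copies `⟪a, x i⟫` into the
`u`-coordinate, the second moves the `a`-coordinates to `⟪a, z' i⟫`, and the third restores the
`u`-coordinates of the `z' i`.
-/

open RealInnerProductSpace Function

section RealFamilies

variable {ι : Type*}

theorem exists_sum_filter_le_eq {α M : Type*} [Fintype ι] [LinearOrder α] [AddCommGroup M]
    {c : ι → α} (hc : Injective c) (D : ι → M) :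
    ∃ ρ : ι → M, ∀ i, ∑ j ∈ Finset.univ.filter (fun j => c j ≤ c i), ρ j = D i := by
  classical
  suffices ∀ s : Finset ι, ∃ ρ : ι → M, ∀ i ∈ s, ∑ j ∈ s.filter (fun j => c j ≤ c i), ρ j = D i
    by simpa using this Finset.univ
  intro s
  induction s using Finset.induction_on_max_value c with
  | empty => exact ⟨0, by simp⟩
  | insert a s ha hmax ih =>
    obtain ⟨ρ, hρ⟩ := ih
    refine ⟨update ρ a (D a - ∑ j ∈ s, ρ j), fun i hi => ?_⟩
    have hs : ∀ t ⊆ s, ∑ j ∈ t, update ρ a (D a - ∑ j ∈ s, ρ j) j = ∑ j ∈ t, ρ j :=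
      fun t ht => Finset.sum_congr rfl fun j hj =>
        update_of_ne (ne_of_mem_of_not_mem (ht hj) ha) _ _
    rcases Finset.mem_insert.1 hi with rfl | hi
    · have hall : ∀ j ∈ insert i s, c j ≤ c i := fun j hj =>
        (Finset.mem_insert.1 hj).elim (fun h => h ▸ le_rfl) (hmax j)
      rw [Finset.filter_true_of_mem hall, Finset.sum_insert ha, hs s subset_rfl, update_self,
        sub_add_cancel]
    · have hai : ¬ c a ≤ c i := fun h => ha (hc (le_antisymm h (hmax i hi)) ▸ hi)
      rw [Finset.filter_insert, if_neg hai, hs _ (Finset.filter_subset _ _), hρ i hi]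

lemma exists_pos_add_le_of_lt [Finite ι] (c : ι → ℝ) :
    ∃ η > 0, ∀ i j, c i < c j → c i + η ≤ c j := by
  have : ∀ᶠ η in nhdsWithin (0 : ℝ) (Ioi 0), 0 < η ∧ ∀ i j, c i < c j → c i + η ≤ c j := by
    refine eventually_mem_nhdsWithin.and
      (Filter.eventually_all.2 fun i => Filter.eventually_all.2 fun j => ?_)
    by_cases h : c i < c j
    · filter_upwards [nhdsWithin_le_nhds (eventually_le_nhds (sub_pos.2 h))] with η hη _
      linarith
    · exact Filter.Eventually.of_forall fun _ h' => absurd h' h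
  exact this.exists

/-- Take `g = t • k` for an enumeration `k` of `ι`: a collision `f i + t k i = f j + t k j`
determines `t`, so all but finitely many small `t` work. -/
lemma exists_abs_le_injective_add [Fintype ι] (f : ι → ℝ) {ε : ℝ} (hε : 0 < ε) :
    ∃ g : ι → ℝ, (∀ i, |g i| ≤ ε) ∧ Injective fun i => f i + g i := by
  set M : ℝ := Fintype.card ι + 1
  let k (i : ι) : ℝ := (Fintype.equivFin ι i : ℕ)
  have hk : Injective k := fun i j h =>
    (Fintype.equivFin ι).injective (Fin.ext (by simpa [k] using h))
  obtain ⟨t, ht, hbad⟩ := (Set.Ioo_infinite (div_pos hε (by positivity : 0 < M)))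
    |>.exists_notMem_finset (Finset.univ.offDiag.image fun p => (f p.2 - f p.1) / (k p.1 - k p.2))
  refine ⟨fun i => t * k i, fun i => ?_, fun i j hij => by_contra fun hne => hbad ?_⟩
  · have hkM : k i ≤ M := by
      simp only [k, M]
      exact_mod_cast (Fintype.equivFin ι i).isLt.le.trans (Nat.le_succ _)
    calc |t * k i| = t * k i := abs_of_nonneg (mul_nonneg ht.1.le (Nat.cast_nonneg _))
      _ ≤ t * M := by gcongr; exact ht.1.le
      _ ≤ ε := ((lt_div_iff₀ (by positivity)).1 ht.2).le
  · refine Finset.mem_image.2 ⟨(i, j), Finset.mem_offDiag.2 ⟨Finset.mem_univ _,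
      Finset.mem_univ _, hne⟩, ?_⟩
    rw [div_eq_iff (sub_ne_zero.2 (hk.ne hne))]
    simp only at hij
    linarith

end RealFamilies

/-- Parameters of the field `x ↦ (relu (⟪n, x⟫ - α) - relu (⟪n, x⟫ - β)) • w`; as `w ⟂ n`,
`Ramp.map` is its exact time-one flow. -/
structure Ramp (E : Type*) [NormedAddCommGroup E] [InnerProductSpace ℝ E] where
  n : E
  w : E
  α : ℝ
  β : ℝ
  inner_n_w : ⟪n, w⟫ = 0

namespace Ramp

variable {E : Type*} [NormedAddCommGroup E] [InnerProductSpace ℝ E]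

def profile (r : Ramp E) (s : ℝ) : ℝ := max (s - r.α) 0 - max (s - r.β) 0

def map (r : Ramp E) (x : E) : E := x + r.profile ⟪r.n, x⟫ • r.w

def flow (L : List (Ramp E)) (x : E) : E := L.foldl (fun y r => r.map y) x

lemma profile_eq_zero_of_le_α (r : Ramp E) (hαβ : r.α ≤ r.β) {s : ℝ} (hs : s ≤ r.α) :
    r.profile s = 0 := by
  simp [profile, max_eq_right (sub_nonpos.2 hs), max_eq_right (sub_nonpos.2 (hs.trans hαβ))]

lemma profile_eq_sub_of_β_le (r : Ramp E) (hαβ : r.α ≤ r.β) {s : ℝ} (hs : r.β ≤ s) :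
    r.profile s = r.β - r.α := by
  rw [profile, max_eq_left (by linarith), max_eq_left (by linarith)]
  ring

lemma inner_n_add_smul_w (r : Ramp E) (x : E) (c : ℝ) : ⟪r.n, x + c • r.w⟫ = ⟪r.n, x⟫ := by
  simp [inner_add_right, inner_smul_right, r.inner_n_w]

lemma flow_append (L₁ L₂ : List (Ramp E)) (x : E) : flow (L₁ ++ L₂) x = flow L₂ (flow L₁ x) :=
  List.foldl_append

lemma flow_eq_add_sum {L : List (Ramp E)} {n : E} (hL : ∀ r ∈ L, r.n = n) (x : E) :
    flow L x = x + (L.map fun r => r.profile ⟪n, x⟫ • r.w).sum := by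
  induction L generalizing x with
  | nil => simp [flow]
  | cons r L ih =>
    obtain rfl := hL r List.mem_cons_self
    have hmap : ⟪r.n, r.map x⟫ = ⟪r.n, x⟫ := r.inner_n_add_smul_w x _
    rw [flow, List.foldl_cons, ← flow, ih (fun r' hr' => hL r' (List.mem_cons_of_mem r hr')),
      hmap, map, List.map_cons, List.sum_cons, add_assoc]

end Ramp

section Steering

variable {E : Type*} [NormedAddCommGroup E] [InnerProductSpace ℝ E] {ι : Type*} [Fintype ι]

/-- Ramp `j` translates by `ρ j` exactly the points of level `≥ ⟪n, y j⟫` (the levels are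
`η`-separated), so `ρ` has to solve the triangular system of `exists_sum_filter_le_eq`; solving it
in `(ℝ ∙ n)ᗮ` makes each `ρ j` orthogonal to `n`. -/
theorem exists_flow_eq_of_inner_eq (n : E) {y y' : ι → E} (hy : Injective fun i => ⟪n, y i⟫)
    (hyy' : ∀ i, ⟪n, y' i⟫ = ⟪n, y i⟫) :
    ∃ L : List (Ramp E), ∀ i, Ramp.flow L (y i) = y' i := by
  set c := fun i => ⟪n, y i⟫
  obtain ⟨η, hη, hgap⟩ := exists_pos_add_le_of_lt c
  obtain ⟨ρ, hρ⟩ := exists_sum_filter_le_eq hy (M := (ℝ ∙ n)ᗮ) fun i =>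
    ⟨y' i - y i, Submodule.mem_orthogonal_singleton_iff_inner_right.2 (by
      rw [inner_sub_right, hyy', sub_self])⟩
  let R (j : ι) : Ramp E := ⟨n, η⁻¹ • (ρ j : E), c j - η, c j, by
    rw [inner_smul_right, Submodule.mem_orthogonal_singleton_iff_inner_right.1 (ρ j).2, mul_zero]⟩
  have hR : ∀ i j, (R j).profile (c i) • (R j).w = if c j ≤ c i then (ρ j : E) else 0 := by
    intro i j
    have hαβ : (R j).α ≤ (R j).β := by simp [R, hη.le]
    split_ifs with h
    · rw [(R j).profile_eq_sub_of_β_le hαβ h, smul_smul]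
      simp [R, hη.ne']
    · have hlow : c i ≤ (R j).α := by simp only [R]; linarith [hgap i j (not_le.1 h)]
      rw [(R j).profile_eq_zero_of_le_α hαβ hlow, zero_smul]
  refine ⟨Finset.univ.toList.map R, fun i => ?_⟩
  rw [Ramp.flow_eq_add_sum (n := n) (by simp [R]), List.map_map, Finset.sum_map_toList]
  change y i + ∑ j, (R j).profile (c i) • (R j).w = y' i
  have hsum := congrArg Subtype.val (hρ i)
  push_cast at hsum
  rw [Finset.sum_congr rfl fun j _ => hR i j, ← Finset.sum_filter, hsum, add_sub_cancel]

theorem exists_flow_eq_of_injective_inner {a u : E} (hu : ‖u‖ = 1) (hau : ⟪a, u⟫ = 0)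
    {x z : ι → E} (hx : Injective fun i => ⟪a, x i⟫) (hz : Injective fun i => ⟪a, z i⟫) :
    ∃ L : List (Ramp E), ∀ i, Ramp.flow L (x i) = z i := by
  let lift (y : E) (i : ι) : E := y + (⟪a, x i⟫ - ⟪u, y⟫) • u
  have hu_lift : ∀ y i, ⟪u, lift y i⟫ = ⟪a, x i⟫ := fun y i => by
    simp [lift, inner_add_right, inner_smul_right, hu]
  have ha_lift : ∀ y i, ⟪a, lift y i⟫ = ⟪a, y⟫ := fun y i => by
    simp [lift, inner_add_right, inner_smul_right, hau]
  obtain ⟨L₁, hL₁⟩ := exists_flow_eq_of_inner_eq a hx fun i => ha_lift (x i) i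
  obtain ⟨L₂, hL₂⟩ := exists_flow_eq_of_inner_eq u (y := fun i => lift (x i) i)
    (y' := fun i => lift (z i) i) (by simpa only [hu_lift] using hx)
    fun i => (hu_lift _ i).trans (hu_lift _ i).symm
  obtain ⟨L₃, hL₃⟩ := exists_flow_eq_of_inner_eq a (y := fun i => lift (z i) i)
    (by simpa only [ha_lift] using hz) fun i => (ha_lift _ i).symm
  exact ⟨L₁ ++ L₂ ++ L₃, fun i => by simp only [Ramp.flow_append, hL₁, hL₂, hL₃]⟩

/-- A vector space over `ℝ` is not a finite union of proper subspaces; avoid `⊥` and the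
hyperplanes `(x i - x j)ᗮ`. -/
lemma exists_norm_eq_one_injective_inner [Nontrivial E] {x : ι → E} (hx : Injective x) :
    ∃ a : E, ‖a‖ = 1 ∧ Injective fun i => ⟪a, x i⟫ := by
  let s : Finset (Submodule ℝ E) :=
    insert ⊥ (Finset.univ.offDiag.image fun p => (ℝ ∙ (x p.1 - x p.2))ᗮ)
  have hs : ⊤ ∉ s := by
    simp only [s, Finset.mem_insert, Finset.mem_image, Finset.mem_offDiag, not_or, not_exists]
    refine ⟨top_ne_bot, fun p ⟨hp, h⟩ => ?_⟩
    rw [Submodule.orthogonal_eq_top_iff, Submodule.span_singleton_eq_bot, sub_eq_zero] at h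
    exact hp.2.2 (hx h)
  obtain ⟨a, ha⟩ :=
    (Set.ne_univ_iff_exists_notMem _).1 (Subspace.biUnion_ne_univ_of_top_notMem hs)
  simp only [s, Set.mem_iUnion, Finset.mem_insert, Finset.mem_image, Finset.mem_offDiag,
    not_exists] at ha
  have ha0 : a ≠ 0 := fun h => ha ⊥ (Or.inl rfl) (h ▸ Submodule.zero_mem _)
  refine ⟨‖a‖⁻¹ • a, norm_smul_inv_norm ha0, fun i j hij => by_contra fun hne => ?_⟩
  refine ha _ (Or.inr ⟨(i, j), ⟨Finset.mem_univ _, Finset.mem_univ _, hne⟩, rfl⟩)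
    (Submodule.mem_orthogonal_singleton_iff_inner_right.2 ?_)
  simp only [real_inner_smul_left] at hij
  change ⟪x i - x j, a⟫ = 0
  rw [real_inner_comm, inner_sub_right,
    mul_left_cancel₀ (inv_ne_zero (norm_ne_zero_iff.2 ha0)) hij, sub_self]

lemma exists_norm_eq_one_inner_eq_zero [FiniteDimensional ℝ E] (hE : 2 ≤ Module.finrank ℝ E)
    (a : E) : ∃ u : E, ‖u‖ = 1 ∧ ⟪a, u⟫ = 0 := by
  have hspan : Module.finrank ℝ (ℝ ∙ a) ≤ 1 := by
    simpa using finrank_span_le_card (R := ℝ) ({a} : Set E)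
  have hne : (ℝ ∙ a)ᗮ ≠ ⊥ := by
    rw [← Submodule.one_le_finrank_iff]
    have := Submodule.finrank_add_finrank_orthogonal (ℝ ∙ a)
    omega
  obtain ⟨v, hv, hv0⟩ := Submodule.exists_mem_ne_zero_of_ne_bot hne
  refine ⟨‖v‖⁻¹ • v, norm_smul_inv_norm hv0, ?_⟩
  rw [inner_smul_right, Submodule.mem_orthogonal_singleton_iff_inner_right.1 hv, mul_zero]

lemma exists_norm_sub_le_injective_inner {a : E} (ha : ‖a‖ = 1) (z : ι → E) {ε : ℝ}
    (hε : 0 < ε) :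
    ∃ z' : ι → E, (∀ i, ‖z' i - z i‖ ≤ ε) ∧ Injective fun i => ⟪a, z' i⟫ := by
  obtain ⟨g, hgε, hg⟩ := exists_abs_le_injective_add (fun i => ⟪a, z i⟫) hε
  refine ⟨fun i => z i + g i • a, fun i => ?_, ?_⟩
  · simpa [norm_smul, ha] using hgε i
  · simpa [inner_add_right, inner_smul_right, real_inner_self_eq_norm_sq, ha] using hg

end Steering

section Polygon

variable {E : Type*} [NormedAddCommGroup E] [NormedSpace ℝ E]

/-- The piecewise linear path through `P 0, …, P K` at the times `0, Δ, …, K Δ`. -/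
def polygon (P : ℕ → E) (Δ : ℝ) (K : ℕ) (t : ℝ) : E :=
  P 0 + ∑ k ∈ Finset.range K, max 0 (min 1 (t / Δ - k)) • (P (k + 1) - P k)

lemma continuous_polygon (P : ℕ → E) (Δ : ℝ) (K : ℕ) : Continuous (polygon P Δ K) := by
  unfold polygon
  fun_prop

lemma polygon_eq_of_mem_Icc (P : ℕ → E) {Δ : ℝ} (hΔ : 0 < Δ) {k K : ℕ} (hk : k < K) {t : ℝ}
    (ht : t ∈ Icc (k * Δ) ((k + 1) * Δ)) :
    polygon P Δ K t = P k + (t / Δ - k) • (P (k + 1) - P k) := by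
  obtain ⟨m, rfl⟩ := Nat.exists_eq_add_of_lt hk
  have h0 : k ≤ t / Δ := (le_div_iff₀ hΔ).2 ht.1
  have h1 : t / Δ ≤ k + 1 := (div_le_iff₀ hΔ).2 ht.2
  have hpast : ∀ l ∈ Finset.range k,
      max 0 (min 1 (t / Δ - l)) • (P (l + 1) - P l) = P (l + 1) - P l := by
    intro l hl
    have : (l : ℝ) + 1 ≤ k := by exact_mod_cast Finset.mem_range.1 hl
    rw [min_eq_left (by linarith), max_eq_right zero_le_one, one_smul]
  have hfuture : ∀ l ∈ Finset.range m,
      max 0 (min 1 (t / Δ - ↑(k + 1 + l))) • (P (k + 1 + l + 1) - P (k + 1 + l)) = 0 := by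
    intro l _
    have : t / Δ - ↑(k + 1 + l) ≤ 0 := by
      push_cast
      linarith [(l.cast_nonneg : (0 : ℝ) ≤ l)]
    rw [max_eq_left (min_le_of_right_le this), zero_smul]
  rw [polygon, add_right_comm, Finset.sum_range_add, Finset.sum_range_succ,
    Finset.sum_congr rfl hpast, Finset.sum_range_sub, Finset.sum_congr rfl hfuture,
    Finset.sum_const_zero, min_eq_right (by linarith), max_eq_right (by linarith)]
  abel

lemma hasDerivAt_polygon (P : ℕ → E) {Δ : ℝ} (hΔ : 0 < Δ) {k K : ℕ} (hk : k < K) {t : ℝ}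
    (ht : t ∈ Ioo (k * Δ) ((k + 1) * Δ)) :
    HasDerivAt (polygon P Δ K) (Δ⁻¹ • (P (k + 1) - P k)) t := by
  have hline : HasDerivAt (fun s => P k + (s / Δ - k) • (P (k + 1) - P k))
      (Δ⁻¹ • (P (k + 1) - P k)) t := by
    simpa [div_eq_mul_inv, mul_comm] using
      ((((hasDerivAt_id t).div_const Δ).sub_const (k : ℝ)).smul_const (P (k + 1) - P k)).const_add
        (P k)
  refine hline.congr_of_eventuallyEq ?_
  filter_upwards [Ioo_mem_nhds ht.1 ht.2] with s hs
  exact polygon_eq_of_mem_Icc P hΔ hk (Ioo_subset_Icc_self hs)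

end Polygon

section Realization

variable {d : ℕ}

/-- Rows `i` and `j` of `rampA` both read off `⟪n, x⟫`; `rampB` shifts them by `-α` and `-β`,
and `rampW` sends the difference of the two ReLUs to `w`. -/
def rampA (i j : Fin d) (n : EuclideanSpace ℝ (Fin d)) : Matrix (Fin d) (Fin d) ℝ :=
  Matrix.of fun k l => if k = i ∨ k = j then n l else 0

def rampB (i j : Fin d) (α β : ℝ) : EuclideanSpace ℝ (Fin d) :=
  WithLp.toLp 2 fun k => if k = i then -α else if k = j then -β else 0

def rampW (i j : Fin d) (w : EuclideanSpace ℝ (Fin d)) : Matrix (Fin d) (Fin d) ℝ :=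
  Matrix.of fun k l => if l = i then w k else if l = j then -w k else 0

lemma mvec_rampW_reluVec {i j : Fin d} (hij : i ≠ j) (r : Ramp (EuclideanSpace ℝ (Fin d)))
    (w x : EuclideanSpace ℝ (Fin d)) :
    mvec (rampW i j w) (reluVec (mvec (rampA i j r.n) x + rampB i j r.α r.β)) =
      r.profile ⟪r.n, x⟫ • w := by
  ext k
  simp only [mvec, reluVec, rampA, rampB, rampW, Matrix.of_apply, PiLp.toLp_apply,
    PiLp.add_apply]
  rw [Fintype.sum_eq_add i j hij fun l hl => by simp [hl.1, hl.2]]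
  simp [hij, hij.symm, Ramp.profile, PiLp.inner_apply, mul_comm, ← sub_eq_add_neg]
  ring

end Realization

section SwitchingGrid

def grid (K : ℕ) (Δ : ℝ) : Finset ℝ := (Finset.range (K + 1)).image fun k : ℕ => (k : ℝ) * Δ

variable {K : ℕ} {Δ : ℝ}

lemma natCast_floor_mul_mem_grid (hΔ : 0 < Δ) {t : ℝ} (ht : t ≤ K * Δ) :
    (⌊t / Δ⌋₊ : ℝ) * Δ ∈ grid K Δ :=
  Finset.mem_image_of_mem _ <| Finset.mem_range_succ_iff.2 <|
    Nat.floor_le_of_le ((div_le_iff₀ hΔ).2 ht)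

lemma pcOn_comp_floor {α : Type*} (f : ℕ → α) (hΔ : 0 < Δ) :
    PCOn (fun t => f ⌊t / Δ⌋₊) (K * Δ) (grid K Δ) := by
  intro t₁ _ t₂ ht₂ hle hS
  by_contra hne
  have hlt : ⌊t₁ / Δ⌋₊ < ⌊t₂ / Δ⌋₊ :=
    (Nat.floor_le_floor (div_le_div_of_nonneg_right hle hΔ.le)).lt_of_ne fun h =>
      hne (congrArg f h)
  refine hS _ (natCast_floor_mul_mem_grid hΔ ht₂.2) ⟨?_, ?_⟩
  · exact (div_lt_iff₀ hΔ).1 (Nat.lt_of_floor_lt hlt)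
  · exact (le_div_iff₀ hΔ).1 (Nat.floor_le (div_nonneg ht₂.1 hΔ.le))

lemma floor_lt_and_mem_Ioo (hΔ : 0 < Δ) {t : ℝ} (ht : t ∈ Icc 0 (K * Δ))
    (htS : t ∉ grid K Δ) :
    ⌊t / Δ⌋₊ < K ∧ t ∈ Ioo (⌊t / Δ⌋₊ * Δ) ((⌊t / Δ⌋₊ + 1) * Δ) := by
  have hlow : (⌊t / Δ⌋₊ : ℝ) * Δ < t :=
    ((le_div_iff₀ hΔ).1 (Nat.floor_le (div_nonneg ht.1 hΔ.le))).lt_of_ne fun h =>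
      htS (h ▸ natCast_floor_mul_mem_grid hΔ ht.2)
  have hhigh : t < (⌊t / Δ⌋₊ + 1) * Δ := (div_lt_iff₀ hΔ).1 (Nat.lt_floor_add_one _)
  refine ⟨?_, hlow, hhigh⟩
  have : (⌊t / Δ⌋₊ : ℝ) * Δ < K * Δ := hlow.trans_le ht.2
  exact_mod_cast lt_of_mul_lt_mul_right this hΔ.le

end SwitchingGrid

section Flow

variable {d : ℕ}

theorem solvesNODE_polygon {i j : Fin d} (hij : i ≠ j) (r : ℕ → Ramp (EuclideanSpace ℝ (Fin d)))
    {K : ℕ} {Δ : ℝ} (hΔ : 0 < Δ) {P : ℕ → EuclideanSpace ℝ (Fin d)}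
    (hP : ∀ k < K, P (k + 1) = (r k).map (P k)) :
    SolvesNODE (fun t => rampA i j (r ⌊t / Δ⌋₊).n) (fun t => rampW i j (Δ⁻¹ • (r ⌊t / Δ⌋₊).w))
      (fun t => rampB i j (r ⌊t / Δ⌋₊).α (r ⌊t / Δ⌋₊).β) (K * Δ) (grid K Δ) (polygon P Δ K) := by
  refine ⟨(continuous_polygon P Δ K).continuousOn, fun t ht htS => ?_⟩
  obtain ⟨hk, htk⟩ := floor_lt_and_mem_Ioo hΔ ht htS
  set k := ⌊t / Δ⌋₊
  have hstep : P (k + 1) - P k = (r k).profile ⟪(r k).n, P k⟫ • (r k).w := by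
    rw [hP k hk, Ramp.map, add_sub_cancel_left]
  have hXt :
      polygon P Δ K t = P k + ((t / Δ - k) * (r k).profile ⟪(r k).n, P k⟫) • (r k).w := by
    rw [polygon_eq_of_mem_Icc P hΔ hk (Ioo_subset_Icc_self htk), hstep, smul_smul]
  rw [mvec_rampW_reluVec hij, hXt, Ramp.inner_n_add_smul_w, smul_comm, ← hstep]
  exact (hasDerivAt_polygon P hΔ hk htk).hasDerivWithinAt

theorem exists_isFlowNODE_flow (hd : 2 ≤ d) {T : ℝ} (hT : 0 < T)
    (L : List (Ramp (EuclideanSpace ℝ (Fin d)))) :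
    ∃ (A W : ℝ → Matrix (Fin d) (Fin d) ℝ) (b : ℝ → EuclideanSpace ℝ (Fin d)) (S : Finset ℝ),
      PCOn A T S ∧ PCOn W T S ∧ PCOn b T S ∧ IsFlowNODE A W b T S (Ramp.flow L) := by
  obtain ⟨i, j, hij⟩ : ∃ i j : Fin d, i ≠ j := ⟨⟨0, by omega⟩, ⟨1, by omega⟩, by simp⟩
  -- one idle step after the ramps of `L`, so that the number of steps is positive
  set K := L.length + 1
  obtain ⟨Δ, hΔ, rfl⟩ : ∃ Δ > 0, (K : ℝ) * Δ = T :=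
    ⟨T / K, by positivity, mul_div_cancel₀ T (Nat.cast_ne_zero.2 L.length.succ_ne_zero)⟩
  let r (k : ℕ) : Ramp (EuclideanSpace ℝ (Fin d)) := L.getD k ⟨0, 0, 0, 0, inner_zero_left _⟩
  refine ⟨fun t => rampA i j (r ⌊t / Δ⌋₊).n, fun t => rampW i j (Δ⁻¹ • (r ⌊t / Δ⌋₊).w),
    fun t => rampB i j (r ⌊t / Δ⌋₊).α (r ⌊t / Δ⌋₊).β, grid K Δ,
    pcOn_comp_floor (fun k => rampA i j (r k).n) hΔ,
    pcOn_comp_floor (fun k => rampW i j (Δ⁻¹ • (r k).w)) hΔ,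
    pcOn_comp_floor (fun k => rampB i j (r k).α (r k).β) hΔ, fun x₀ => ?_⟩
  let P (k : ℕ) := Ramp.flow (L.take k) x₀
  have hP : ∀ k, P (k + 1) = (r k).map (P k) := by
    intro k
    simp only [P, r, List.take_add_one, Ramp.flow_append, List.getD_eq_getElem?_getD]
    cases L[k]? <;> simp [Ramp.flow, Ramp.map]
  refine ⟨polygon P Δ K, solvesNODE_polygon hij r hΔ fun k _ => hP k, ?_, ?_⟩
  · rw [polygon_eq_of_mem_Icc P hΔ L.length.succ_pos (by simp [hΔ.le])]
    simp [P, Ramp.flow]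
  · rw [polygon_eq_of_mem_Icc P hΔ (Nat.lt_succ_self L.length) (by simp [K, hΔ])]
    simp [P, K, hΔ.ne', Ramp.flow, List.take_of_length_le]

end Flow

/-- **Approximate simultaneous control.**
Given pairwise distinct initial points and arbitrary (not necessarily distinct)
targets in `ℝ^d` (`d ≥ 2`), for every `ε > 0` there are piecewise constant
controls whose neural-ODE flow drives each initial point within distance `ε` of
its target at time `T`. -/
theorem approximate_simultaneous_control
    (d N : ℕ) (hd : 2 ≤ d) (T : ℝ) (hT : 0 < T)
    (x z : Fin N → EuclideanSpace ℝ (Fin d))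
    (hx : Function.Injective x)
    (ε : ℝ) (hε : 0 < ε) :
    ∃ (A W : ℝ → Matrix (Fin d) (Fin d) ℝ) (b : ℝ → EuclideanSpace ℝ (Fin d))
      (S : Finset ℝ),
      PCOn A T S ∧ PCOn W T S ∧ PCOn b T S ∧
      ∃ X : Fin N → ℝ → EuclideanSpace ℝ (Fin d),
        (∀ i, SolvesNODE A W b T S (X i)) ∧
        (∀ i, X i 0 = x i) ∧
        (∀ i, ‖X i T - z i‖ ≤ ε) := by
  have hdim : 2 ≤ Module.finrank ℝ (EuclideanSpace ℝ (Fin d)) := by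
    rwa [finrank_euclideanSpace_fin]
  have : Nontrivial (EuclideanSpace ℝ (Fin d)) :=
    Module.nontrivial_of_finrank_pos (R := ℝ) (by omega)
  obtain ⟨a, ha, hxa⟩ := exists_norm_eq_one_injective_inner hx
  obtain ⟨u, hu, hau⟩ := exists_norm_eq_one_inner_eq_zero hdim a
  obtain ⟨z', hz'z, hz'a⟩ := exists_norm_sub_le_injective_inner ha z hε
  obtain ⟨L, hL⟩ := exists_flow_eq_of_injective_inner hu hau hxa hz'a
  obtain ⟨A, W, b, S, hA, hW, hb, hflow⟩ := exists_isFlowNODE_flow hd hT L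
  choose X hX hX0 hXT using fun i => hflow (x i)
  exact ⟨A, W, b, S, hA, hW, hb, X, hX, hX0, fun i => by rw [hXT, hL]; exact hz'z i⟩
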